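/- arXiv:2011.01091 — 2 statements merged into one kernel-verified Lean document; each statement's English description precedes it below -/
import Mathlib

section
/- Let N ≥ 2 and p > 1. There exists a constant c = c(N) > 0, depending only on the dimension N, such that for every ball B_r ⊂ ℝ^N of radius r and every continuously differentiable u : B_r → ℝ with |u|^p and |∇u|^p integrable over B_r, if |{x ∈ B_r : u(x) = 0}| ≥ |B_r|/2, then (∫_{B_r} |u|^p dx)^{1/p} ≤ c · ω_N · p · ((N−1)/N) · r · (∫_{B_r} |∇u|^p dx)^{1/p}. -/
open MeasureTheory Metric Set Bornology

/-!
For `x ∈ U` and `z` in the zero set `Z` of `u`, the fundamental theorem of calculus on the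
segment `[z, x]` bounds `|u x| = |u x - u z|` by `diam U` times the integral of `|∇u|` along the
segment. Averaging over `z ∈ Z`, applying Jensen's inequality in `z` and along the segment, and
integrating in `x` reduces everything to the integral of `|∇u (z + t (x - z))| ^ p` over
`U × U × [0, 1]`. Since `z + t (x - z) = t x + (1 - t) z` and one of `t`, `1 - t` is at least
`1 / 2`, substituting for `x` or for `z` costs a Jacobian of at most `2 ^ N`, whence
`|Z| ^ p ‖u‖_p ^ p ≤ 2 ^ N (diam U · |U|) ^ p ‖∇u‖_p ^ p`. On a ball with `|Z| ≥ |B_r| / 2`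
this reads `‖u‖_p ≤ 2 ^ N · 4 r · ‖∇u‖_p`, and `p (N - 1) / N ≥ 1 / 2` absorbs the remaining
factors into the constant.
-/

open Module
open scoped ENNReal

theorem rpow_lintegral_le_measure_univ_rpow_mul_lintegral {α : Type*} [MeasurableSpace α]
    (μ : Measure α) {p : ℝ} (hp : 1 ≤ p) {f : α → ℝ≥0∞} (hf : AEMeasurable f μ) :
    (∫⁻ a, f a ∂μ) ^ p ≤ μ univ ^ (p - 1) * ∫⁻ a, f a ^ p ∂μ := by
  have hp0 : 0 < p := one_pos.trans_le hp
  have h := eLpNorm'_le_eLpNorm'_mul_rpow_measure_univ one_pos hp hf.aestronglyMeasurable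
  simp only [eLpNorm'_eq_lintegral_enorm, enorm_eq_self, ENNReal.rpow_one, div_one] at h
  calc (∫⁻ a, f a ∂μ) ^ p
      ≤ ((∫⁻ a, f a ^ p ∂μ) ^ (1 / p) * μ univ ^ (1 - 1 / p)) ^ p := by gcongr
    _ = μ univ ^ (p - 1) * ∫⁻ a, f a ^ p ∂μ := by
      rw [ENNReal.mul_rpow_of_nonneg _ _ hp0.le, ← ENNReal.rpow_mul, ← ENNReal.rpow_mul,
        mul_comm, one_div_mul_cancel hp0.ne', ENNReal.rpow_one]
      congr 2
      field_simp

theorem ofReal_integral_norm_rpow {α G : Type*} [MeasurableSpace α] {μ : Measure α}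
    [NormedAddCommGroup G] {f : α → G} {p : ℝ} (hp : 0 ≤ p)
    (hf : Integrable (fun x => ‖f x‖ ^ p) μ) :
    ENNReal.ofReal (∫ x, ‖f x‖ ^ p ∂μ) = ∫⁻ x, ‖f x‖ₑ ^ p ∂μ := by
  rw [ofReal_integral_eq_lintegral_ofReal hf (ae_of_all _ fun x => by positivity)]
  simp_rw [← ENNReal.ofReal_rpow_of_nonneg (norm_nonneg _) hp, ofReal_norm]

section NormedSpace

variable {E F : Type*} [NormedAddCommGroup E] [NormedSpace ℝ E] [NormedAddCommGroup F]
  [NormedSpace ℝ F]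

theorem Convex.enorm_sub_le_mul_lintegral_enorm_fderiv {U : Set E} (hUc : Convex ℝ U)
    (hU : IsOpen U) {u : E → F} (hu : ContDiffOn ℝ 1 u U) {x z : E} (hx : x ∈ U) (hz : z ∈ U) :
    ‖u x - u z‖ₑ ≤ ‖x - z‖ₑ * ∫⁻ t in Icc (0 : ℝ) 1, ‖fderiv ℝ u (z + t • (x - z))‖ₑ := by
  let γ : ℝ → E := fun t => z + t • (x - z)
  have hγ : MapsTo γ (Icc 0 1) U := fun t ht => hUc.add_smul_sub_mem hz hx ht
  have hderiv (t : ℝ) (ht : t ∈ Icc (0 : ℝ) 1) :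
      deriv (u ∘ γ) t = fderiv ℝ u (γ t) (x - z) := by
    have hdu := (hu.contDiffAt (hU.mem_nhds (hγ ht))).differentiableAt one_ne_zero
    have hdγ : HasDerivAt γ (x - z) t := by
      simpa only [one_smul] using ((hasDerivAt_id' t).smul_const (x - z)).const_add z
    exact (hdu.hasFDerivAt.comp_hasDerivAt t hdγ).deriv
  have hftc := enorm_sub_le_lintegral_deriv_of_contDiffOn_Icc
    (hu.comp (by fun_prop) hγ) zero_le_one
  simp only [Function.comp_apply, γ, one_smul, zero_smul, add_zero, add_sub_cancel] at hftc
  calc ‖u x - u z‖ₑ ≤ ∫⁻ t in Icc (0 : ℝ) 1, ‖deriv (u ∘ γ) t‖ₑ := hftc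
    _ ≤ ∫⁻ t in Icc (0 : ℝ) 1, ‖x - z‖ₑ * ‖fderiv ℝ u (γ t)‖ₑ := by
      refine setLIntegral_mono' measurableSet_Icc fun t ht => ?_
      rw [hderiv t ht, mul_comm]
      exact (fderiv ℝ u (γ t)).le_opENorm (x - z)
    _ = _ := lintegral_const_mul' _ _ enorm_ne_top

variable [MeasurableSpace E] [BorelSpace E] [FiniteDimensional ℝ E] (μ : Measure E)
  [μ.IsAddHaarMeasure]

theorem lintegral_comp_smul_add_le {a : ℝ} (ha : 1 / 2 ≤ a) (H : E → ℝ≥0∞) (y : E) :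
    ∫⁻ x, H (a • x + y) ∂μ ≤ 2 ^ finrank ℝ E * ∫⁻ x, H x ∂μ := by
  have ha0 : 0 < a := by linarith
  have hscale : (a ^ finrank ℝ E)⁻¹ ≤ 2 ^ finrank ℝ E := by
    rw [← inv_pow]
    exact pow_le_pow_left₀ (by positivity) (by rw [inv_le_comm₀ ha0 two_pos]; linarith) _
  calc ∫⁻ x, H (a • x + y) ∂μ
      = ∫⁻ w, H (w + y) ∂(μ.map (MeasurableEquiv.smul₀ a ha0.ne')) := by
        rw [lintegral_map_equiv]; rfl
    _ = ENNReal.ofReal (a ^ finrank ℝ E)⁻¹ * ∫⁻ x, H x ∂μ := by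
        rw [MeasurableEquiv.coe_smul₀, Measure.map_addHaar_smul μ ha0.ne', lintegral_smul_measure,
          lintegral_add_right_eq_self, abs_of_pos (by positivity), smul_eq_mul]
    _ ≤ 2 ^ finrank ℝ E * ∫⁻ x, H x ∂μ := by
        gcongr
        exact (ENNReal.ofReal_le_ofReal hscale).trans_eq (by norm_num)

theorem lintegral_lintegral_comp_segment_le (U : Set E) {H : E → ℝ≥0∞} (hH : Measurable H)
    (t : ℝ) :
    ∫⁻ x in U, ∫⁻ z in U, H (z + t • (x - z)) ∂μ ∂μ ≤ 2 ^ finrank ℝ E * μ U * ∫⁻ x, H x ∂μ := by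
  have hseg (x z : E) : z + t • (x - z) = t • x + (1 - t) • z := by module
  simp_rw [hseg]
  suffices ∫⁻ x in U, ∫⁻ z in U, H (t • x + (1 - t) • z) ∂μ ∂μ ≤
      ∫⁻ _ in U, 2 ^ finrank ℝ E * ∫⁻ x, H x ∂μ ∂μ by
    rwa [setLIntegral_const, mul_right_comm] at this
  rcases le_total t (1 / 2) with hle | hge
  · refine lintegral_mono fun x => (setLIntegral_le_lintegral _ _).trans ?_
    simp_rw [add_comm (t • x)]
    exact lintegral_comp_smul_add_le μ (by linarith) H _
  · rw [lintegral_lintegral_swap (by fun_prop)]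
    refine lintegral_mono fun z => (setLIntegral_le_lintegral _ _).trans ?_
    exact lintegral_comp_smul_add_le μ hge H _

theorem Convex.lintegral_lintegral_lintegral_comp_segment_le {U : Set E} (hUc : Convex ℝ U)
    (hUm : MeasurableSet U) {G : E → ℝ≥0∞} (hG : Measurable G) :
    ∫⁻ x in U, ∫⁻ z in U, (∫⁻ t in Icc (0 : ℝ) 1, G (z + t • (x - z))) ∂μ ∂μ ≤
      2 ^ finrank ℝ E * μ U * ∫⁻ x in U, G x ∂μ := by
  have hGU : Measurable (U.indicator G) := hG.indicator hUm
  calc ∫⁻ x in U, ∫⁻ z in U, (∫⁻ t in Icc (0 : ℝ) 1, G (z + t • (x - z))) ∂μ ∂μ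
      = ∫⁻ x in U, ∫⁻ z in U,
          (∫⁻ t in Icc (0 : ℝ) 1, U.indicator G (z + t • (x - z))) ∂μ ∂μ := by
        refine setLIntegral_congr_fun hUm fun x hx => setLIntegral_congr_fun hUm fun z hz =>
          setLIntegral_congr_fun measurableSet_Icc fun t ht => ?_
        rw [indicator_of_mem (hUc.add_smul_sub_mem hz hx ht)]
    _ = ∫⁻ t in Icc (0 : ℝ) 1, ∫⁻ x in U, ∫⁻ z in U, U.indicator G (z + t • (x - z)) ∂μ ∂μ := by
        have hswap (x : E) :
            ∫⁻ z in U, (∫⁻ t in Icc (0 : ℝ) 1, U.indicator G (z + t • (x - z))) ∂μ =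
              ∫⁻ t in Icc (0 : ℝ) 1, ∫⁻ z in U, U.indicator G (z + t • (x - z)) ∂μ :=
          lintegral_lintegral_swap (hGU.comp (by fun_prop)).aemeasurable
        simp_rw [hswap]
        refine lintegral_lintegral_swap (Measurable.aemeasurable ?_)
        exact (hGU.comp (by fun_prop :
          Measurable fun q : (E × ℝ) × E => q.2 + q.1.2 • (q.1.1 - q.2))).lintegral_prod_right'
    _ ≤ ∫⁻ t in Icc (0 : ℝ) 1, 2 ^ finrank ℝ E * μ U * ∫⁻ x, U.indicator G x ∂μ :=
        lintegral_mono fun t => lintegral_lintegral_comp_segment_le μ U hGU t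
    _ = 2 ^ finrank ℝ E * μ U * ∫⁻ x in U, G x ∂μ := by
        rw [setLIntegral_const, Real.volume_Icc, sub_zero, ENNReal.ofReal_one, mul_one,
          lintegral_indicator hUm]

variable [CompleteSpace F]

theorem Convex.measure_zeroSet_rpow_mul_lintegral_enorm_rpow_le {U : Set E}
    (hUc : Convex ℝ U) (hU : IsOpen U) {u : E → F} (hu : ContDiffOn ℝ 1 u U) {p : ℝ}
    (hp : 1 ≤ p) :
    μ {x ∈ U | u x = 0} ^ p * ∫⁻ x in U, ‖u x‖ₑ ^ p ∂μ ≤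
      2 ^ finrank ℝ E * (ediam U * μ U) ^ p * ∫⁻ x in U, ‖fderiv ℝ u x‖ₑ ^ p ∂μ := by
  have hp0 : 0 ≤ p := by linarith
  set Z := {x ∈ U | u x = 0}
  set D := ediam U
  have hDu : Measurable fun x => ‖fderiv ℝ u x‖ₑ := (measurable_fderiv ℝ u).enorm
  set A : E → E → ℝ≥0∞ := fun x z => ∫⁻ t in Icc (0 : ℝ) 1, ‖fderiv ℝ u (z + t • (x - z))‖ₑ
  have hA (x : E) : Measurable (A x) :=
    (hDu.comp (by fun_prop : Measurable fun q : E × ℝ => q.1 + q.2 • (x - q.1))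
      ).lintegral_prod_right'
  have hpoint (x : E) (hx : x ∈ U) : ‖u x‖ₑ * μ Z ≤ D * ∫⁻ z in U, A x z ∂μ := by
    calc ‖u x‖ₑ * μ Z = ∫⁻ z in Z, ‖u x‖ₑ ∂μ := (setLIntegral_const _ _).symm
      _ ≤ ∫⁻ z in Z, D * A x z ∂μ := setLIntegral_mono ((hA x).const_mul D) fun z hz => by
          calc ‖u x‖ₑ = ‖u x - u z‖ₑ := by rw [hz.2, sub_zero]
            _ ≤ ‖x - z‖ₑ * A x z := hUc.enorm_sub_le_mul_lintegral_enorm_fderiv hU hu hx hz.1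
            _ ≤ D * A x z := by
                gcongr
                rw [← edist_eq_enorm_sub]
                exact edist_le_ediam_of_mem hx hz.1
      _ ≤ ∫⁻ z in U, D * A x z ∂μ := lintegral_mono_set (sep_subset _ _)
      _ = D * ∫⁻ z in U, A x z ∂μ := lintegral_const_mul _ (hA x)
  have hjensen (x : E) : (∫⁻ z in U, A x z ∂μ) ^ p ≤ μ U ^ (p - 1) *
      ∫⁻ z in U, (∫⁻ t in Icc (0 : ℝ) 1, ‖fderiv ℝ u (z + t • (x - z))‖ₑ ^ p) ∂μ := by
    calc (∫⁻ z in U, A x z ∂μ) ^ p ≤ μ U ^ (p - 1) * ∫⁻ z in U, A x z ^ p ∂μ := by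
          simpa using rpow_lintegral_le_measure_univ_rpow_mul_lintegral (μ.restrict U) hp
            (hA x).aemeasurable
      _ ≤ _ := by
          gcongr with z
          simpa using rpow_lintegral_le_measure_univ_rpow_mul_lintegral
            (volume.restrict (Icc (0 : ℝ) 1)) hp (hDu.comp (by fun_prop)).aemeasurable
  have hDup : Measurable fun x => ‖fderiv ℝ u x‖ₑ ^ p := hDu.pow_const p
  have hB : Measurable fun x => ∫⁻ z in U,
      (∫⁻ t in Icc (0 : ℝ) 1, ‖fderiv ℝ u (z + t • (x - z))‖ₑ ^ p) ∂μ :=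
    Measurable.lintegral_prod_right' (f := fun q : E × E =>
      ∫⁻ t in Icc (0 : ℝ) 1, ‖fderiv ℝ u (q.2 + t • (q.1 - q.2))‖ₑ ^ p) <|
      (hDup.comp (by fun_prop : Measurable fun q : (E × E) × ℝ =>
        q.1.2 + q.2 • (q.1.1 - q.1.2))).lintegral_prod_right'
  calc μ Z ^ p * ∫⁻ x in U, ‖u x‖ₑ ^ p ∂μ
      ≤ ∫⁻ x in U, (‖u x‖ₑ * μ Z) ^ p ∂μ := by
        simp_rw [ENNReal.mul_rpow_of_nonneg _ _ hp0, mul_comm _ (μ Z ^ p)]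
        exact lintegral_const_mul_le _ _
    _ ≤ ∫⁻ x in U, D ^ p * μ U ^ (p - 1) * ∫⁻ z in U,
          (∫⁻ t in Icc (0 : ℝ) 1, ‖fderiv ℝ u (z + t • (x - z))‖ₑ ^ p) ∂μ ∂μ := by
        refine setLIntegral_mono' hU.measurableSet fun x hx => ?_
        grw [hpoint x hx, ENNReal.mul_rpow_of_nonneg _ _ hp0, hjensen x, mul_assoc]
    _ = D ^ p * μ U ^ (p - 1) * ∫⁻ x in U, ∫⁻ z in U,
          (∫⁻ t in Icc (0 : ℝ) 1, ‖fderiv ℝ u (z + t • (x - z))‖ₑ ^ p) ∂μ ∂μ :=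
        lintegral_const_mul _ hB
    _ ≤ D ^ p * μ U ^ (p - 1) *
          (2 ^ finrank ℝ E * μ U * ∫⁻ x in U, ‖fderiv ℝ u x‖ₑ ^ p ∂μ) := by
        grw [hUc.lintegral_lintegral_lintegral_comp_segment_le μ hU.measurableSet hDup]
    _ = 2 ^ finrank ℝ E * (D * μ U) ^ p * ∫⁻ x in U, ‖fderiv ℝ u x‖ₑ ^ p ∂μ := by
        have hpow : μ U ^ (p - 1) * μ U = μ U ^ p := by
          conv_rhs => rw [← sub_add_cancel p 1]
          rw [ENNReal.rpow_add_of_nonneg _ _ (by linarith) zero_le_one, ENNReal.rpow_one]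
        rw [ENNReal.mul_rpow_of_nonneg _ _ hp0, ← hpow]
        ring

theorem lintegral_enorm_rpow_ball_le_of_measure_zeroSet_ge_half {x₀ : E} {r : ℝ} (hr : 0 < r)
    {u : E → F} (hu : ContDiffOn ℝ 1 u (ball x₀ r)) {p : ℝ} (hp : 1 ≤ p)
    (hZ : μ (ball x₀ r) / 2 ≤ μ {x ∈ ball x₀ r | u x = 0}) :
    ∫⁻ x in ball x₀ r, ‖u x‖ₑ ^ p ∂μ ≤
      2 ^ finrank ℝ E * ENNReal.ofReal (4 * r) ^ p *
        ∫⁻ x in ball x₀ r, ‖fderiv ℝ u x‖ₑ ^ p ∂μ := by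
  have hp0 : 0 ≤ p := by linarith
  have hdiam : ediam (ball x₀ r) ≤ ENNReal.ofReal (2 * r) :=
    ediam_le_of_forall_dist_le fun x hx y hy =>
      (dist_triangle_right x y x₀).trans (by linarith [mem_ball.1 hx, mem_ball.1 hy])
  set c := μ (ball x₀ r) / 2
  have hc0 : c ≠ 0 :=
    ENNReal.div_ne_zero.2 ⟨(measure_ball_pos μ x₀ hr).ne', ENNReal.ofNat_ne_top⟩
  have hctop : c ≠ ⊤ := ENNReal.div_ne_top measure_ball_lt_top.ne two_ne_zero
  have hB : μ (ball x₀ r) = c * 2 :=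
    (ENNReal.div_mul_cancel two_ne_zero ENNReal.ofNat_ne_top).symm
  have h4r : ENNReal.ofReal (2 * r) * 2 = ENNReal.ofReal (4 * r) := by
    rw [← ENNReal.ofReal_ofNat 2, ← ENNReal.ofReal_mul (by positivity)]
    ring_nf
  rw [← ENNReal.mul_le_mul_iff_right (ENNReal.rpow_pos (pos_iff_ne_zero.2 hc0) hctop).ne'
    (ENNReal.rpow_ne_top_of_nonneg hp0 hctop)]
  calc c ^ p * ∫⁻ x in ball x₀ r, ‖u x‖ₑ ^ p ∂μ
      ≤ μ {x ∈ ball x₀ r | u x = 0} ^ p * ∫⁻ x in ball x₀ r, ‖u x‖ₑ ^ p ∂μ := by gcongr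
    _ ≤ 2 ^ finrank ℝ E * (ediam (ball x₀ r) * μ (ball x₀ r)) ^ p *
          ∫⁻ x in ball x₀ r, ‖fderiv ℝ u x‖ₑ ^ p ∂μ :=
        (convex_ball x₀ r).measure_zeroSet_rpow_mul_lintegral_enorm_rpow_le μ isOpen_ball hu hp
    _ ≤ 2 ^ finrank ℝ E * (ENNReal.ofReal (2 * r) * (c * 2)) ^ p *
          ∫⁻ x in ball x₀ r, ‖fderiv ℝ u x‖ₑ ^ p ∂μ := by
        grw [hdiam, hB]
    _ = c ^ p * (2 ^ finrank ℝ E * ENNReal.ofReal (4 * r) ^ p *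
          ∫⁻ x in ball x₀ r, ‖fderiv ℝ u x‖ₑ ^ p ∂μ) := by
        rw [← h4r, mul_left_comm, ENNReal.mul_rpow_of_nonneg _ _ hp0]
        ring

theorem rpow_integral_norm_rpow_ball_le_of_measure_zeroSet_ge_half {x₀ : E} {r : ℝ} (hr : 0 < r)
    {u : E → F} (hu : ContDiffOn ℝ 1 u (ball x₀ r)) {p : ℝ} (hp : 1 ≤ p)
    (hui : IntegrableOn (fun x => ‖u x‖ ^ p) (ball x₀ r) μ)
    (hDui : IntegrableOn (fun x => ‖fderiv ℝ u x‖ ^ p) (ball x₀ r) μ)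
    (hZ : μ (ball x₀ r) / 2 ≤ μ {x ∈ ball x₀ r | u x = 0}) :
    (∫ x in ball x₀ r, ‖u x‖ ^ p ∂μ) ^ (1 / p) ≤
      2 ^ finrank ℝ E * (4 * r) * (∫ x in ball x₀ r, ‖fderiv ℝ u x‖ ^ p ∂μ) ^ (1 / p) := by
  have hp0 : 0 < p := by linarith
  have hI : ∫ x in ball x₀ r, ‖u x‖ ^ p ∂μ ≤
      2 ^ finrank ℝ E * (4 * r) ^ p * ∫ x in ball x₀ r, ‖fderiv ℝ u x‖ ^ p ∂μ := by
    rw [← ENNReal.ofReal_le_ofReal_iff (by positivity), ofReal_integral_norm_rpow hp0.le hui,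
      ENNReal.ofReal_mul (by positivity), ENNReal.ofReal_mul (by positivity),
      ofReal_integral_norm_rpow hp0.le hDui, ← ENNReal.ofReal_rpow_of_nonneg (by positivity) hp0.le]
    simpa using lintegral_enorm_rpow_ball_le_of_measure_zeroSet_ge_half μ hr hu hp hZ
  have hIg : 0 ≤ ∫ x in ball x₀ r, ‖fderiv ℝ u x‖ ^ p ∂μ := by positivity
  calc (∫ x in ball x₀ r, ‖u x‖ ^ p ∂μ) ^ (1 / p)
      ≤ (2 ^ finrank ℝ E * (4 * r) ^ p * ∫ x in ball x₀ r, ‖fderiv ℝ u x‖ ^ p ∂μ) ^ (1 / p) := by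
        gcongr
    _ = (2 ^ finrank ℝ E) ^ (1 / p) * (4 * r) *
          (∫ x in ball x₀ r, ‖fderiv ℝ u x‖ ^ p ∂μ) ^ (1 / p) := by
        rw [Real.mul_rpow (by positivity) hIg, Real.mul_rpow (by positivity) (by positivity),
          one_div, Real.rpow_rpow_inv (by positivity) hp0.ne']
    _ ≤ 2 ^ finrank ℝ E * (4 * r) * (∫ x in ball x₀ r, ‖fderiv ℝ u x‖ ^ p ∂μ) ^ (1 / p) := by
        gcongr
        exact Real.rpow_le_self_of_one_le (one_le_pow₀ one_le_two)
          (by rw [div_le_one hp0]; exact hp)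

end NormedSpace

theorem norm_gradient_eq_norm_fderiv {E : Type*} [NormedAddCommGroup E] [InnerProductSpace ℝ E]
    [CompleteSpace E] (u : E → ℝ) (x : E) : ‖gradient u x‖ = ‖fderiv ℝ u x‖ :=
  (InnerProductSpace.toDual ℝ E).symm.norm_map _

/-- Lemma 2.4 (Poincaré type inequality): if `u` vanishes on at least half of the ball `B_r`,
then its `L^p` norm is controlled by the `L^p` norm of its gradient, with a constant
depending only on the dimension `N`. -/
theorem stmt2 (N : ℕ) (hN : 2 ≤ N) :
    ∃ c > (0 : ℝ), ∀ p : ℝ, 1 < p →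
      ∀ (x₀ : EuclideanSpace ℝ (Fin N)) (r : ℝ), 0 < r →
      ∀ u : EuclideanSpace ℝ (Fin N) → ℝ,
        ContDiffOn ℝ 1 u (ball x₀ r) →
        IntegrableOn (fun x => |u x| ^ p) (ball x₀ r) →
        IntegrableOn (fun x => ‖gradient u x‖ ^ p) (ball x₀ r) →
        volume (ball x₀ r) / 2 ≤ volume {x ∈ ball x₀ r | u x = 0} →
        (∫ x in ball x₀ r, |u x| ^ p) ^ (1 / p) ≤
          c * (volume (ball (0 : EuclideanSpace ℝ (Fin N)) 1)).toReal * p *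
            (((N : ℝ) - 1) / N) * r *
            (∫ x in ball x₀ r, ‖gradient u x‖ ^ p) ^ (1 / p) := by
  set ω := (volume (ball (0 : EuclideanSpace ℝ (Fin N)) 1)).toReal
  have hω : 0 < ω := ENNReal.toReal_pos (measure_ball_pos volume 0 one_pos).ne'
    measure_ball_lt_top.ne
  refine ⟨2 ^ (N + 3) / ω, by positivity, fun p hp x₀ r hr u hu hui hDui hZ => ?_⟩
  simp only [← Real.norm_eq_abs, norm_gradient_eq_norm_fderiv] at hui hDui ⊢
  have key :=
    rpow_integral_norm_rpow_ball_le_of_measure_zeroSet_ge_half volume hr hu hp.le hui hDui hZ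
  rw [finrank_euclideanSpace_fin] at key
  refine key.trans (mul_le_mul_of_nonneg_right ?_ (by positivity))
  have hN' : (1 : ℝ) / 2 ≤ ((N : ℝ) - 1) / N := by
    rw [div_le_div_iff₀ two_pos (by positivity)]
    linarith [show (2 : ℝ) ≤ N by exact_mod_cast hN]
  calc (2 : ℝ) ^ N * (4 * r) = 2 ^ (N + 3) * 1 * (1 / 2) * r := by ring
    _ ≤ 2 ^ (N + 3) * p * (((N : ℝ) - 1) / N) * r := by gcongr
    _ = 2 ^ (N + 3) / ω * ω * p * (((N : ℝ) - 1) / N) * r := by rw [div_mul_cancel₀ _ hω.ne']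
end

section
/- Let θ > 1, α > 0, β > 0, C > 0, r > 0 and k₀ ∈ ℝ. Let Φ : ℝ × (0, r] → [0, ∞) be nonincreasing in its first argument and nondecreasing in its second argument, and suppose that Φ(l, ρ) ≤ C · Φ(k, σ)^θ / ((σ − ρ)^α · (l − k)^β) for all k₀ ≤ k < l and all 0 < ρ < σ ≤ r. If d > 0 satisfies d^β ≥ 2^{(α+β)/(θ−1) + 2α + β} · C · Φ(k₀, r)^{θ−1} / r^α, then Φ(k₀ + d, r/2) = 0. -/
/-!
Along the levels `kₘ = k₀ + d - d / 2^m` and radii `rₘ = r/2 + r / 2^(m+1)`, the hypothesis gives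
`Yₘ₊₁ ≤ A bᵐ Yₘ^θ` for `Yₘ = Φ(kₘ, rₘ)`, with `b = 2^(α+β)`. The bound on `d` says exactly that
`A Y₀^(θ-1) ≤ 2^(-μ)` for `μ = (α+β)/(θ-1)`, and since `b 2^(-μ(θ-1)) = 1` the superlinear power `θ`
absorbs the growth of `bᵐ`: inductively `Yₘ ≤ Y₀ 2^(-μm)`. Monotonicity of `Φ` gives
`Φ(k₀+d, r/2) ≤ Yₘ → 0`.
-/

open Filter Topology

lemma le_mul_pow_of_succ_le_mul_pow_mul_rpow {Y : ℕ → ℝ} {A b q θ : ℝ}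
    (hY : ∀ m, 0 ≤ Y m) (hA : 0 ≤ A) (hb : 0 ≤ b) (hq : 0 < q) (hθ : 0 < θ)
    (hrec : ∀ m, Y (m + 1) ≤ A * b ^ m * Y m ^ θ)
    (hbq : b * q ^ (θ - 1) ≤ 1) (hAq : A * Y 0 ^ (θ - 1) ≤ q) (m : ℕ) :
    Y m ≤ Y 0 * q ^ m := by
  have hsplit (x : ℝ) (hx : 0 ≤ x) : x ^ θ = x * x ^ (θ - 1) := by
    rw [← Real.rpow_one_add' hx (by simpa using hθ.ne'), add_sub_cancel]
  induction m with
  | zero => simp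
  | succ m ih =>
    calc Y (m + 1) ≤ A * b ^ m * Y m ^ θ := hrec m
      _ ≤ A * b ^ m * (Y 0 * q ^ m) ^ θ := by gcongr; exact hY m
      _ = A * Y 0 ^ (θ - 1) * (b * q ^ (θ - 1)) ^ m * (Y 0 * q ^ m) := by
        rw [Real.mul_rpow (hY 0) (by positivity), ← Real.rpow_pow_comm hq.le,
          hsplit _ (hY 0), hsplit _ hq.le]
        ring
      _ ≤ q * 1 * (Y 0 * q ^ m) := by
        gcongr
        · exact mul_nonneg (hY 0) (by positivity)
        · exact pow_le_one₀ (by positivity) hbq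
      _ = Y 0 * q ^ (m + 1) := by ring

lemma two_rpow_mul_two_rpow_mul_rpow_neg_div {α β θ : ℝ} (hθ : 1 < θ) :
    2 ^ α * 2 ^ β * ((2 : ℝ) ^ (-((α + β) / (θ - 1)))) ^ (θ - 1) = 1 := by
  rw [← Real.rpow_mul zero_le_two, ← Real.rpow_add two_pos, ← Real.rpow_add two_pos, neg_mul,
    div_mul_cancel₀ _ (sub_pos.2 hθ).ne', add_neg_cancel, Real.rpow_zero]

lemma mul_le_two_rpow_neg_of_two_rpow_mul_le {α β μ C r d X : ℝ} (hr : 0 < r) (hd : 0 < d)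
    (h : 2 ^ (μ + 2 * α + β) * C * X / r ^ α ≤ d ^ β) :
    C * (2 ^ α) ^ 2 * 2 ^ β / (r ^ α * d ^ β) * X ≤ 2 ^ (-μ) := by
  have hr' : 0 < r ^ α := Real.rpow_pos_of_pos hr α
  have hd' : 0 < d ^ β := Real.rpow_pos_of_pos hd β
  rw [div_le_iff₀ hr', Real.rpow_add two_pos, Real.rpow_add two_pos, mul_comm 2 α,
    Real.rpow_mul zero_le_two, Real.rpow_two] at h
  rw [Real.rpow_neg zero_le_two, div_mul_eq_mul_div, div_le_iff₀ (mul_pos hr' hd'),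
    inv_mul_eq_div, le_div_iff₀ (Real.rpow_pos_of_pos two_pos μ)]
  linarith

namespace DeGiorgi

noncomputable def level (k₀ d : ℝ) (m : ℕ) : ℝ := k₀ + d - d / 2 ^ m

noncomputable def radius (r : ℝ) (m : ℕ) : ℝ := r / 2 + r / 2 ^ (m + 1)

section Sequences

variable {k₀ d r : ℝ} (m : ℕ)

@[simp] lemma level_zero : level k₀ d 0 = k₀ := by simp [level]

@[simp] lemma radius_zero : radius r 0 = r := by simp [radius]

lemma level_succ_sub_level : level k₀ d (m + 1) - level k₀ d m = d / 2 ^ (m + 1) := by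
  simp only [level, pow_succ]; field_simp; ring

lemma radius_sub_radius_succ : radius r m - radius r (m + 1) = r / 2 ^ (m + 2) := by
  simp only [radius, pow_succ]; field_simp; ring

lemma le_level (hd : 0 ≤ d) : k₀ ≤ level k₀ d m := by
  have : d / 2 ^ m ≤ d := div_le_self hd (one_le_pow₀ one_le_two)
  simp only [level]; linarith

lemma level_le (hd : 0 ≤ d) : level k₀ d m ≤ k₀ + d := by
  simp only [level]; linarith [div_nonneg hd (pow_nonneg zero_le_two m)]

lemma half_lt_radius (hr : 0 < r) : r / 2 < radius r m := by
  simp only [radius]; linarith [div_pos hr (pow_pos two_pos (m + 1))]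

lemma radius_le (hr : 0 ≤ r) : radius r m ≤ r := by
  have : r / 2 ^ (m + 1) ≤ r / 2 :=
    div_le_div_of_nonneg_left hr two_pos (le_self_pow₀ one_le_two m.succ_ne_zero)
  simp only [radius]; linarith

end Sequences


section Iteration

variable {Φ : ℝ → ℝ → ℝ} {θ α β C r k₀ d : ℝ}

lemma le_apply_level_radius (hd : 0 ≤ d) (hr : 0 < r)
    (hΦlevel : ∀ k l ρ, k ≤ l → 0 < ρ → ρ ≤ r → Φ l ρ ≤ Φ k ρ)
    (hΦradius : ∀ k ρ σ, 0 < ρ → ρ ≤ σ → σ ≤ r → Φ k ρ ≤ Φ k σ) (m : ℕ) :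
    Φ (k₀ + d) (r / 2) ≤ Φ (level k₀ d m) (radius r m) := by
  have hρ : 0 < radius r m := (half_pos hr).trans (half_lt_radius m hr)
  calc Φ (k₀ + d) (r / 2) ≤ Φ (k₀ + d) (radius r m) :=
        hΦradius _ _ _ (half_pos hr) (half_lt_radius m hr).le (radius_le m hr.le)
    _ ≤ Φ (level k₀ d m) (radius r m) :=
        hΦlevel _ _ _ (level_le m hd) hρ (radius_le m hr.le)

lemma apply_level_radius_succ_le (hd : 0 < d) (hr : 0 < r)
    (hmain : ∀ k l ρ σ, k₀ ≤ k → k < l → 0 < ρ → ρ < σ → σ ≤ r →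
      Φ l ρ ≤ C * Φ k σ ^ θ / ((σ - ρ) ^ α * (l - k) ^ β)) (m : ℕ) :
    Φ (level k₀ d (m + 1)) (radius r (m + 1)) ≤
      C * (2 ^ α) ^ 2 * 2 ^ β / (r ^ α * d ^ β) * (2 ^ α * 2 ^ β) ^ m *
        Φ (level k₀ d m) (radius r m) ^ θ := by
  have hlevel := level_succ_sub_level (k₀ := k₀) (d := d) m
  have hradius := radius_sub_radius_succ (r := r) m
  have h := hmain (level k₀ d m) (level k₀ d (m + 1)) (radius r (m + 1)) (radius r m)
    (le_level m hd.le) (by rw [← sub_pos, hlevel]; positivity)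
    ((half_pos hr).trans (half_lt_radius _ hr)) (by rw [← sub_pos, hradius]; positivity)
    (radius_le m hr.le)
  refine h.trans (le_of_eq ?_)
  rw [hlevel, hradius, Real.div_rpow hr.le (by positivity), Real.div_rpow hd.le (by positivity),
    ← Real.rpow_pow_comm zero_le_two, ← Real.rpow_pow_comm zero_le_two]
  field_simp
  ring

end Iteration

end DeGiorgi

open DeGiorgi

/-- Abstract De Giorgi iteration lemma: if `Φ` is nonincreasing in the level, nondecreasing
in the radius, and satisfies the recursive inequality
`Φ(l,ρ) ≤ C Φ(k,σ)^θ / ((σ−ρ)^α (l−k)^β)`, then any `d > 0` with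
`d^β ≥ 2^{(α+β)/(θ−1) + 2α + β} C Φ(k₀,r)^{θ−1} / r^α` forces `Φ(k₀+d, r/2) = 0`. -/
theorem stmt5 (θ α β C r k₀ : ℝ)
    (hθ : 1 < θ) (hα : 0 < α) (hβ : 0 < β) (hC : 0 < C) (hr : 0 < r)
    (Φ : ℝ → ℝ → ℝ)
    (hΦnonneg : ∀ k ρ, 0 ≤ Φ k ρ)
    (hΦlevel : ∀ k l ρ, k ≤ l → 0 < ρ → ρ ≤ r → Φ l ρ ≤ Φ k ρ)
    (hΦradius : ∀ k ρ σ, 0 < ρ → ρ ≤ σ → σ ≤ r → Φ k ρ ≤ Φ k σ)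
    (hmain : ∀ k l ρ σ, k₀ ≤ k → k < l → 0 < ρ → ρ < σ → σ ≤ r →
      Φ l ρ ≤ C * Φ k σ ^ θ / ((σ - ρ) ^ α * (l - k) ^ β))
    (d : ℝ) (hd : 0 < d)
    (hdβ : 2 ^ ((α + β) / (θ - 1) + 2 * α + β) * C * Φ k₀ r ^ (θ - 1) / r ^ α ≤ d ^ β) :
    Φ (k₀ + d) (r / 2) = 0 := by
  set μ := (α + β) / (θ - 1)
  have hμ : 0 < μ := div_pos (by linarith) (by linarith)
  set q : ℝ := 2 ^ (-μ)
  have hq : 0 < q := Real.rpow_pos_of_pos two_pos _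
  have hq1 : q < 1 := Real.rpow_lt_one_of_one_lt_of_neg one_lt_two (neg_neg_of_pos hμ)
  have hdecay (m : ℕ) : Φ (level k₀ d m) (radius r m) ≤ Φ k₀ r * q ^ m := by
    simpa using le_mul_pow_of_succ_le_mul_pow_mul_rpow
      (Y := fun m => Φ (level k₀ d m) (radius r m)) (fun _ => hΦnonneg _ _) (by positivity)
      (by positivity) hq (by linarith) (apply_level_radius_succ_le hd hr hmain)
      (two_rpow_mul_two_rpow_mul_rpow_neg_div hθ).le
      (by simpa using mul_le_two_rpow_neg_of_two_rpow_mul_le hr hd hdβ) m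
  have hlim : Tendsto (fun m : ℕ => Φ k₀ r * q ^ m) atTop (𝓝 0) := by
    simpa using (tendsto_pow_atTop_nhds_zero_of_lt_one hq.le hq1).const_mul (Φ k₀ r)
  refine le_antisymm (ge_of_tendsto' hlim fun m => ?_) (hΦnonneg _ _)
  exact (le_apply_level_radius hd.le hr hΦlevel hΦradius m).trans (hdecay m)
end
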